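/- arXiv:0805.0181 — 6 statements merged into one kernel-verified Lean document; each statement's English description precedes it below -/
import Mathlib

section
/- Let m ≥ 2 and k ≥ 1, and let T_{m,k} be the balanced m-ary tree of depth k (the rooted tree in which every non-leaf vertex has exactly m children and every leaf is at distance k from the root, so that T_{m,k} has (m^{k+1}-1)/(m-1) vertices). Then π(T_{m,k}) = (m^{k+1} + (-1)^k)/(m+1), i.e., the minimum cardinality of a set of vertices that propagates to T_{m,k} equals (m^{k+1} + (-1)^k)/(m+1). -/
/-- The propagation closure: `PropReach G S v` means vertex `v` eventually receives the
information when the process starts from the set `S` on the graph `G`.  A vertex `w` can be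
added whenever some vertex `v` already having the information is adjacent to `w` and every
neighbour of `v` other than `w` already has the information. -/
inductive PropReach {V : Type*} (G : SimpleGraph V) (S : Set V) : V → Prop
  | base {v : V} (hv : v ∈ S) : PropReach G S v
  | step {v w : V} (hv : PropReach G S v) (hadj : G.Adj v w)
      (hall : ∀ x : V, G.Adj v x → x ≠ w → PropReach G S x) : PropReach G S w

/-- `S ↷ G` : the set `S` propagates to (all of) the graph `G`. -/
def Propagates {V : Type*} (G : SimpleGraph V) (S : Set V) : Prop :=
  ∀ v : V, PropReach G S v

/-- `π(G)`: the minimum cardinality of a set of vertices propagating to `G`. -/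
noncomputable def propNum {V : Type*} (G : SimpleGraph V) : ℕ :=
  sInf {n : ℕ | ∃ S : Set V, S.ncard = n ∧ Propagates G S}

/-- The balanced `m`-ary tree of depth `d`: vertices are words over an alphabet of
size `m` of length at most `d` (the root is the empty word), and each vertex `l` of
length `< d` is adjacent to its `m` children `x :: l`. -/
def BalancedTree (m d : ℕ) : SimpleGraph {l : List (Fin m) // l.length ≤ d} where
  Adj a b := (∃ x : Fin m, (a : List (Fin m)) = x :: (b : List (Fin m))) ∨
             (∃ x : Fin m, (b : List (Fin m)) = x :: (a : List (Fin m)))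
  symm := ⟨fun a b h => h.symm⟩
  loopless := ⟨by
    rintro a (⟨x, hx⟩ | ⟨x, hx⟩) <;> simpa using congrArg List.length hx⟩

/-!
Lower bound: order the forcings of a propagation by the round in which they happen; then every
vertex outside `S` is forced by a neighbour and no vertex forces twice. Count each forcing edge
at the level of its lower endpoint. A vertex of level `j` meets at most two forcing edges, so the
numbers `c j` of forcing edges at level `j` satisfy `c 0 = 0` and `c j + c (j + 1) ≤ 2 m ^ j`;
pairing the levels from the leaves upwards bounds the number of forced vertices, and hence
`(m + 1) |S| ≥ m ^ (k + 1) + (-1) ^ k`.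

Upper bound: take the vertices at even distance from the leaves, except the first child of every
vertex. Going up from the leaves, each vertex at odd height is forced by its second child, whose
subtree is already known, and then forces its first child.
-/

open Finset Filter

section Forcing

variable {V : Type*} (G : SimpleGraph V) (S : Set V)

def forcedWithin : ℕ → Set V
  | 0 => S
  | n + 1 => forcedWithin n ∪
      {w | ∃ u ∈ forcedWithin n, G.Adj u w ∧ ∀ x, G.Adj u x → x ≠ w → x ∈ forcedWithin n}

lemma forcedWithin_mono : Monotone (forcedWithin G S) :=
  monotone_nat_of_le_succ fun _ => Set.subset_union_left

variable {G S}

lemma exists_mem_forcedWithin [G.LocallyFinite] {v : V} (h : PropReach G S v) :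
    ∃ n, v ∈ forcedWithin G S n := by
  have eventually_mem {x : V} (hx : ∃ n, x ∈ forcedWithin G S n) :
      ∀ᶠ n in atTop, x ∈ forcedWithin G S n :=
    let ⟨a, ha⟩ := hx; eventually_atTop.2 ⟨a, fun _ hn => forcedWithin_mono G S hn ha⟩
  induction h with
  | base hv => exact ⟨0, hv⟩
  | @step v w _ hadj _ ihv ihall =>
    have hnbrs : ∀ᶠ n in atTop, ∀ x ∈ G.neighborSet v, x ≠ w → x ∈ forcedWithin G S n :=
      (eventually_all_finite (G.neighborSet v).toFinite).2 fun x hx => by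
        by_cases hxw : x = w
        · exact Eventually.of_forall fun _ h => absurd hxw h
        · exact (eventually_mem (ihall x hx hxw)).mono fun _ h _ => h
    obtain ⟨n, hv, hn⟩ := ((eventually_mem ihv).and hnbrs).exists
    exact ⟨n + 1, Or.inr ⟨v, hv, hadj, hn⟩⟩

theorem Propagates.exists_injOn_forcer [G.LocallyFinite] (h : Propagates G S) :
    ∃ f : V → V, (∀ w ∉ S, G.Adj (f w) w) ∧ Set.InjOn f Sᶜ := by
  classical
  let time (v : V) : ℕ := Nat.find (exists_mem_forcedWithin (h v))
  have time_le {v : V} {n : ℕ} (hv : v ∈ forcedWithin G S n) : time v ≤ n := Nat.find_min' _ hv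
  have forcer (w : V) (hw : w ∉ S) :
      ∃ u, G.Adj u w ∧ ∀ x, G.Adj u x → x ≠ w → time x < time w := by
    have hw_time : w ∈ forcedWithin G S (time w) := Nat.find_spec (exists_mem_forcedWithin (h w))
    obtain ⟨n, hn⟩ : ∃ n, time w = n + 1 :=
      Nat.exists_eq_succ_of_ne_zero fun h0 => hw (by rwa [h0] at hw_time)
    rw [hn] at hw_time
    obtain hw' | ⟨u, -, hadj, hall⟩ := hw_time
    · have := time_le hw'; omega
    · exact ⟨u, hadj, fun x hx hxw => by have := time_le (hall x hx hxw); omega⟩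
  choose! f hadj hearlier using forcer
  -- if `u` forced both `w₁ ≠ w₂`, each of them would have been known before the other
  refine ⟨f, hadj, fun w₁ hw₁ w₂ hw₂ heq => by_contra fun hne => ?_⟩
  have h₁ := hearlier w₁ hw₁ w₂ (heq ▸ hadj w₂ hw₂) (Ne.symm hne)
  have h₂ := hearlier w₂ hw₂ w₁ (heq ▸ hadj w₁ hw₁) hne
  omega

lemma propNum_eq_ncard (hS : Propagates G S) (hmin : ∀ T, Propagates G T → S.ncard ≤ T.ncard) :
    propNum G = S.ncard :=
  le_antisymm (Nat.sInf_le ⟨S, rfl, hS⟩)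
    (le_csInf ⟨_, S, rfl, hS⟩ fun _ ⟨T, hT, hTG⟩ => hT ▸ hmin T hTG)

end Forcing

section Graded

variable {V : Type*} (h : V → ℕ)

def forcingLevel (f : V → V) (w : V) : ℕ := max (h w) (h (f w))

lemma card_forcingLevel_add_le [Fintype V] [DecidableEq V] {G : SimpleGraph V} {T : Finset V}
    {f : V → V} (hG : ∀ u v, G.Adj u v → h u = h v + 1 ∨ h v = h u + 1)
    (hf : ∀ w ∈ T, G.Adj (f w) w) (hinj : Set.InjOn f T) (j : ℕ) :
    #{w ∈ T | forcingLevel h f w = j} + #{w ∈ T | forcingLevel h f w = j + 1} ≤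
      2 * #{v | h v = j} :=
  calc _ = #({w ∈ T | forcingLevel h f w = j} ∪ {w ∈ T | forcingLevel h f w = j + 1}) :=
        (card_union_of_disjoint (disjoint_filter.2 fun _ _ h₁ h₂ => by omega)).symm
    _ ≤ #({w ∈ T | h w = j} ∪ {w ∈ T | h (f w) = j}) := card_le_card fun w hw => by
        simp only [mem_union, mem_filter] at hw ⊢
        simp only [forcingLevel] at hw
        have hwT : w ∈ T := by tauto
        have := hG _ _ (hf w hwT)
        simp only [hwT, true_and] at hw ⊢
        omega
    _ ≤ #{w ∈ T | h w = j} + #{w ∈ T | h (f w) = j} := card_union_le _ _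
    _ ≤ #{v | h v = j} + #{v | h v = j} := by
        refine add_le_add (card_le_card fun w hw => ?_)
          (card_le_card_of_injOn f (fun w hw => ?_) (hinj.mono (filter_subset _ _)))
        · simp_all
        · simp_all
    _ = 2 * #{v | h v = j} := (two_mul _).symm

end Graded

lemma alternating_geom_bound {m : ℤ} (hm : 0 ≤ m + 1) (c : ℕ → ℤ) (h0 : c 0 = 0) :
    ∀ K, (∀ j, j + 1 ≤ K → c j + c (j + 1) ≤ 2 * m ^ j) →
      (m + 1) * ∑ j ∈ range (K + 1), c j + m ^ (K + 1) + (-1) ^ K ≤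
        (m + 1) * ∑ j ∈ range (K + 1), m ^ j
  | 0, _ => by simp [h0]
  | 1, hc => by
    have := mul_le_mul_of_nonneg_left (hc 0 le_rfl) hm
    simp only [sum_range_succ, sum_range_zero, h0] at this ⊢
    linear_combination this
  | K + 2, hc => by
    have ih := alternating_geom_bound hm c h0 K fun j hj => hc j (by omega)
    have hlast := mul_le_mul_of_nonneg_left (hc (K + 1) (by omega)) hm
    simp only [sum_range_succ _ (K + 2), sum_range_succ _ (K + 1)]
    linear_combination ih + hlast

lemma mul_sum_ite_even {m : ℤ} (e : ℕ → ℤ) (h0 : e 0 = 1) :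
    ∀ K, (∀ j, j + 1 ≤ K → e (j + 1) = m ^ (j + 1) - m ^ j) →
      (m + 1) * ∑ j ∈ range (K + 1), (if Even (K + j) then e j else 0) = m ^ (K + 1) + (-1) ^ K
  | 0, _ => by simp [h0]
  | 1, he => by simp [sum_range_succ, he 0 le_rfl, parity_simps]; ring
  | K + 2, he => by
    have ih := mul_sum_ite_even e h0 K fun j hj => he j (by omega)
    have hparity (j : ℕ) : Even (K + 2 + j) ↔ Even (K + j) := by
      rw [show K + 2 + j = K + j + 1 + 1 by ring, Nat.even_add_one, Nat.even_add_one, not_not]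
    simp only [sum_range_succ _ (K + 2), sum_range_succ _ (K + 1), hparity]
    rw [if_neg (by rw [Nat.not_even_iff_odd]; exact ⟨K, by ring⟩), if_pos ⟨K + 1, by ring⟩,
      he (K + 1) (by omega)]
    linear_combination ih

lemma List.IsSuffix.eq_or_cons_isSuffix {α : Type*} {t l : List α} (h : t <:+ l) :
    l = t ∨ ∃ x, x :: t <:+ l := by
  obtain ⟨p, rfl⟩ := h
  rcases List.eq_nil_or_concat p with rfl | ⟨q, x, rfl⟩
  · exact .inl rfl
  · exact .inr ⟨x, q, by simp⟩

noncomputable instance {α : Type*} [Finite α] (n : ℕ) : Fintype {l : List α // l.length ≤ n} :=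
  (List.finite_length_le α n).fintype

namespace BalancedTree

abbrev Vertex (m K : ℕ) := {l : List (Fin m) // l.length ≤ K}

variable {m K : ℕ}

lemma length_eq_or_eq_of_adj {u v : Vertex m K} (h : (BalancedTree m K).Adj u v) :
    u.1.length = v.1.length + 1 ∨ v.1.length = u.1.length + 1 := by
  rcases h with ⟨x, hx⟩ | ⟨x, hx⟩ <;> simp [hx]

lemma card_level {j : ℕ} (hj : j ≤ K) : #{v : Vertex m K | v.1.length = j} = m ^ j := by
  rw [← Fintype.card_subtype, ← Fintype.card_fin m, ← card_vector, Fintype.card_fin]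
  exact Fintype.card_congr
    { toFun v := ⟨v.1.1, v.2⟩
      invFun w := ⟨⟨w.1, w.2.trans_le hj⟩, w.2⟩
      left_inv _ := rfl
      right_inv _ := rfl }

lemma card_vertex : Fintype.card (Vertex m K) = ∑ j ∈ range (K + 1), m ^ j := by
  rw [← card_univ, card_eq_sum_card_fiberwise (t := range (K + 1)) fun v _ =>
    mem_range.2 (Nat.lt_succ_of_le v.2)]
  exact sum_congr rfl fun j hj => card_level (Nat.lt_succ_iff.1 (mem_range.1 hj))

theorem le_mul_ncard_of_propagates {S : Set (Vertex m K)}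
    (hS : Propagates (BalancedTree m K) S) :
    (m : ℤ) ^ (K + 1) + (-1) ^ K ≤ (m + 1) * S.ncard := by
  classical
  obtain ⟨f, hf, hinj⟩ := hS.exists_injOn_forcer
  set T := S.toFinsetᶜ with hT_def
  have hmemT {w : Vertex m K} : w ∈ T ↔ w ∉ S := by simp [hT_def]
  let level := forcingLevel (fun v : Vertex m K => v.1.length) f
  have hT : ∑ j ∈ range (K + 1), #{w ∈ T | level w = j} = #T :=
    (card_eq_sum_card_fiberwise fun w _ =>
      mem_range.2 (Nat.lt_succ_of_le (max_le w.2 (f w).2))).symm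
  have h0 : #{w ∈ T | level w = 0} = 0 := card_eq_zero.2 <| filter_eq_empty_iff.2 fun w hw => by
    have := length_eq_or_eq_of_adj (hf w (hmemT.1 hw))
    simp only [level, forcingLevel]
    omega
  have hpairs (j : ℕ) (hj : j + 1 ≤ K) :
      (#{w ∈ T | level w = j} : ℤ) + #{w ∈ T | level w = j + 1} ≤ 2 * (m : ℤ) ^ j := by
    have := card_forcingLevel_add_le (T := T) (fun v : Vertex m K => v.1.length)
      (fun _ _ => length_eq_or_eq_of_adj) (fun w hw => hf w (hmemT.1 hw))
      (hinj.mono fun w hw => hmemT.1 hw) j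
    rw [card_level (by omega)] at this
    exact_mod_cast this
  have hbound := alternating_geom_bound (by positivity)
    (fun j => (#{w ∈ T | level w = j} : ℤ)) (by simp [h0]) K hpairs
  have hcard : S.ncard + #T = ∑ j ∈ range (K + 1), m ^ j := by
    rw [← card_vertex, Set.ncard_eq_toFinset_card', hT_def, card_add_card_compl]
  have hS_card : (S.ncard : ℤ) = ∑ j ∈ range (K + 1), (m : ℤ) ^ j - #T := by
    rw [eq_sub_iff_add_eq]; exact_mod_cast hcard
  rw [hS_card, ← hT]
  push_cast
  linarith

/-- The vertices at even distance from the leaves, except every `a`-th child (the head of a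
word is its position among its siblings). -/
def evenHeightSet (a : Fin m) : Set (Vertex m K) :=
  {v | Even (K + v.1.length) ∧ v.1.head? ≠ some a}

section Propagation

variable {a b : Fin m}

local notation "Reach" => PropReach (BalancedTree m K) (evenHeightSet a)

lemma propReach_of_odd (hab : b ≠ a) {n : ℕ}
    (heven : ∀ v : Vertex m K, v.1.length + 2 * n = K → Reach v →
      ∀ w : Vertex m K, v.1 <:+ w.1 → Reach w)
    (v : Vertex m K) (hv : v.1.length + (2 * n + 1) = K) : Reach v := by
  let c : Vertex m K := ⟨b :: v.1, by simp; omega⟩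
  have hc : c ∈ evenHeightSet a := ⟨⟨v.1.length + n + 1, by simp [c]; omega⟩, by simpa [c]⟩
  have hsub := heven c (by simp [c]; omega) (.base hc)
  refine .step (hsub c (List.suffix_refl _)) (.inl ⟨b, rfl⟩) fun u hu hne => ?_
  rcases hu with ⟨x, hx⟩ | ⟨x, hx⟩
  · exact absurd (Subtype.ext (List.cons.inj hx).2.symm) hne
  · exact hsub u (hx ▸ List.suffix_cons x _)

lemma propReach_of_odd_of_suffix (hab : b ≠ a) {n : ℕ}
    (heven : ∀ v : Vertex m K, v.1.length + 2 * n = K → Reach v →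
      ∀ w : Vertex m K, v.1 <:+ w.1 → Reach w)
    (v : Vertex m K) (hv : v.1.length + (2 * n + 1) = K)
    (hparent : ∀ (u : Vertex m K) (x : Fin m), v.1 = x :: u.1 → Reach u)
    (w : Vertex m K) (hw : v.1 <:+ w.1) : Reach w := by
  have hv_reach := propReach_of_odd hab heven v hv
  have hchild (x : Fin m) (hx : x ≠ a) :=
    heven ⟨x :: v.1, by simp; omega⟩ (by simp; omega)
      (.base ⟨⟨v.1.length + n + 1, by simp; omega⟩, by simpa⟩)
  have ha : Reach ⟨a :: v.1, by simp; omega⟩ :=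
    .step hv_reach (.inr ⟨a, rfl⟩) fun u hu hne => by
      rcases hu with ⟨x, hx⟩ | ⟨x, hx⟩
      · exact hparent u x hx
      · exact hchild x (by rintro rfl; exact hne (Subtype.ext hx)) u (by rw [hx])
  rcases hw.eq_or_cons_isSuffix with hw | ⟨x, hx⟩
  · exact Subtype.ext hw ▸ hv_reach
  · obtain rfl | hxa := eq_or_ne x a
    · exact heven _ (by simp; omega) ha w hx
    · exact hchild x hxa w hx

lemma propReach_of_even_of_suffix (hab : b ≠ a) :
    ∀ (n : ℕ) (v : Vertex m K), v.1.length + 2 * n = K → Reach v →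
      ∀ w : Vertex m K, v.1 <:+ w.1 → Reach w
  | 0, v, hv, hreach, w, hw => by
    rwa [← Subtype.ext (hw.eq_of_length_le (by have := w.2; omega))]
  | n + 1, v, hv, hreach, w, hw => by
    rcases hw.eq_or_cons_isSuffix with hw | ⟨x, hx⟩
    · exact Subtype.ext hw ▸ hreach
    · have hlen := hx.length_le
      exact propReach_of_odd_of_suffix hab (propReach_of_even_of_suffix hab n)
        ⟨x :: v.1, by omega⟩ (by simp; omega)
        (fun u y hy => Subtype.ext (List.cons.inj hy).2 ▸ hreach) w hx

theorem propagates_evenHeightSet (hab : b ≠ a) :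
    Propagates (BalancedTree m K) (evenHeightSet a) := by
  let root : Vertex m K := ⟨[], Nat.zero_le K⟩
  obtain ⟨n, hK | hK⟩ := Nat.even_or_odd' K
  · exact fun w => propReach_of_even_of_suffix hab n root (by simp [root]; omega)
      (.base ⟨⟨n, by simp [root]; omega⟩, by simp [root]⟩) w List.nil_suffix
  · exact fun w => propReach_of_odd_of_suffix hab (propReach_of_even_of_suffix hab n) root
      (by simp [root]; omega) (fun u x hx => by simp [root] at hx) w List.nil_suffix

end Propagation

lemma card_level_head_eq {a : Fin m} {j : ℕ} (hj : j + 1 ≤ K) :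
    #{v : Vertex m K | v.1.length = j + 1 ∧ v.1.head? = some a} = m ^ j := by
  rw [← card_level (m := m) (by omega : j ≤ K)]
  refine card_nbij (fun v => ⟨v.1.tail, by simp; omega⟩) (fun v hv => ?_)
    (fun v hv w hw hvw => ?_)
    (fun u hu => ⟨⟨a :: u.1, by simp at hu ⊢; omega⟩, by simp at hu ⊢; omega, rfl⟩)
  · simp at hv ⊢; omega
  · simp only [coe_filter, mem_univ, true_and, Set.mem_ofPred_eq, List.head?_eq_some_iff] at hv hw
    obtain ⟨-, l, hl⟩ := hv
    obtain ⟨-, l', hl'⟩ := hw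
    simp only [Subtype.mk.injEq, hl, hl', List.tail_cons] at hvw
    exact Subtype.ext (by rw [hl, hl', hvw])

lemma card_level_head_ne {a : Fin m} {j : ℕ} (hj : j + 1 ≤ K) :
    (#{v : Vertex m K | v.1.length = j + 1 ∧ v.1.head? ≠ some a} : ℤ) = m ^ (j + 1) - m ^ j := by
  have := card_filter_add_card_filter_not (s := {v : Vertex m K | v.1.length = j + 1})
    (fun v => v.1.head? = some a)
  simp only [filter_filter, card_level_head_eq hj, card_level hj] at this
  rw [eq_sub_iff_add_eq, add_comm]
  exact_mod_cast this

theorem mul_ncard_evenHeightSet (a : Fin m) :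
    ((m : ℤ) + 1) * (evenHeightSet a : Set (Vertex m K)).ncard = m ^ (K + 1) + (-1) ^ K := by
  classical
  let e (j : ℕ) : ℤ := #{v : Vertex m K | v.1.length = j ∧ v.1.head? ≠ some a}
  have he0 : e 0 = 1 := by
    simp only [e, Nat.cast_eq_one, card_eq_one]
    exact ⟨⟨[], Nat.zero_le K⟩, by
      ext v; simpa [Subtype.ext_iff, List.length_eq_zero_iff] using fun h => by simp [h]⟩
  rw [← mul_sum_ite_even e he0 K fun j hj => card_level_head_ne hj, Set.ncard_eq_toFinset_card',
    card_eq_sum_card_fiberwise (f := fun v => v.1.length) (t := range (K + 1))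
      fun v _ => mem_range.2 (Nat.lt_succ_of_le v.2)]
  push_cast
  congr 1
  refine sum_congr rfl fun j _ => ?_
  split_ifs with hj
  · simp only [e, Nat.cast_inj]
    congr 1
    ext v
    simp only [mem_filter, Set.mem_toFinset, mem_univ, true_and]
    constructor
    · exact fun ⟨⟨_, hv⟩, hlen⟩ => ⟨hlen, hv⟩
    · exact fun ⟨hlen, hv⟩ => ⟨⟨hlen ▸ hj, hv⟩, hlen⟩
  · simp only [Nat.cast_eq_zero, card_eq_zero, filter_eq_empty_iff]
    rintro v hv rfl
    exact hj (Set.mem_toFinset.1 hv).1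

end BalancedTree

theorem propNum_balancedTree_general (m k : ℕ) (hm : 2 ≤ m) :
    ((m : ℤ) + 1) * (propNum (BalancedTree m k) : ℤ) = (m : ℤ) ^ (k + 1) + (-1) ^ k := by
  let a : Fin m := ⟨0, by omega⟩
  have hS := BalancedTree.propagates_evenHeightSet (K := k) (a := a) (b := ⟨1, hm⟩)
    (by simp [a, Fin.ext_iff])
  have hcard := BalancedTree.mul_ncard_evenHeightSet (K := k) a
  rw [propNum_eq_ncard hS fun T hT => ?_, hcard]
  exact_mod_cast le_of_mul_le_mul_left (hcard ▸ BalancedTree.le_mul_ncard_of_propagates hT)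
    (by positivity)

/-- For `m ≥ 2` and `k ≥ 1`, the minimum cardinality of a set of vertices
propagating to the balanced `m`-ary tree of depth `k` equals `(m^(k+1) + (-1)^k)/(m+1)`,
stated multiplicatively over `ℤ` to avoid division. -/
theorem propNum_balancedTree (m k : ℕ) (hm : 2 ≤ m) (hk : 1 ≤ k) :
    ((m : ℤ) + 1) * (propNum (BalancedTree m k) : ℤ) = (m : ℤ) ^ (k + 1) + (-1) ^ k :=
  propNum_balancedTree_general m k hm
end

section
/- Let P_{n,2} be the comb obtained from the path P_n on n vertices by attaching a pendant vertex (a copy of P_2's extra vertex) to each vertex of the path, so #V(P_{n,2}) = 2n. Then π(P_{n,2}) = n/2 if n is even, and π(P_{n,2}) = ⌈n/2⌉ if n is odd; that is, π(P_{n,2}) = ⌈n/2⌉ for all n ≥ 1. -/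
/-- The comb `P_{n,k}`: vertex `(i, 0)` is the `i`-th vertex of the bone (a path on `n`
vertices), and `(i, 0), (i, 1), …, (i, k-1)` is the finger (a path) attached to it; the comb
has `k * n` vertices. -/
def comb (n k : ℕ) : SimpleGraph (Fin n × Fin k) :=
  SimpleGraph.fromRel (fun a b =>
    (a.2.val = 0 ∧ b.2.val = 0 ∧ a.1.val + 1 = b.1.val) ∨
    (a.1 = b.1 ∧ a.2.val + 1 = b.2.val))

section Abstract

variable {V : Type*} (G : SimpleGraph V) (S : Set V)

/-- The round-by-round closure of the propagation process. -/
def Rounds : ℕ → Set V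
  | 0 => S
  | (t+1) => Rounds t ∪ {w | ∃ v ∈ Rounds t, G.Adj v w ∧ ∀ x, G.Adj v x → x ≠ w → x ∈ Rounds t}

lemma Rounds_mono : Monotone (Rounds G S) :=
  monotone_nat_of_le_succ fun _ => Set.subset_union_left

lemma rounds_reach : ∀ t, ∀ v ∈ Rounds G S t, PropReach G S v
  | 0, _, hv => .base hv
  | (t+1), v, hv => by
      rcases hv with hv | ⟨u, hu, hadj, hall⟩
      · exact rounds_reach t v hv
      · exact .step (rounds_reach t u hu) hadj (fun x h1 h2 => rounds_reach t x (hall x h1 h2))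

lemma reach_rounds [Fintype V] {v : V} (h : PropReach G S v) : ∃ t, v ∈ Rounds G S t := by
  classical
  induction h with
  | base hv => exact ⟨0, hv⟩
  | @step v w hv hadj hall ihv ihall =>
      set τ : V → ℕ := fun x => sInf {t | x ∈ Rounds G S t} with hτ
      set T : ℕ := Finset.univ.sup τ with hT
      have hmem : ∀ x : V, (∃ t, x ∈ Rounds G S t) → x ∈ Rounds G S T := by
        intro x hx
        exact Rounds_mono G S (Finset.le_sup (Finset.mem_univ x)) (Nat.sInf_mem hx)
      exact ⟨T+1, Or.inr ⟨v, hmem v ihv, hadj, fun x h1 h2 => hmem x (ihall x h1 h2)⟩⟩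


lemma key [Fintype V] (hprop : Propagates G S) :
    ∃ (f h : V → V) (τ : V → ℕ),
      (∀ w, w ∉ S → G.Adj (f w) w) ∧
      (∀ w, w ∉ S → τ (f w) < τ w) ∧
      (∀ w, h w ∈ S) ∧
      (∀ w1 w2, w1 ∉ S → w2 ∉ S → w1 ≠ w2 → h w1 = h w2 →
        (∃ x, x ∉ S ∧ f x = w1) ∨ (∃ x, x ∉ S ∧ f x = w2)) := by
  classical
  set τ : V → ℕ := fun x => sInf {t | x ∈ Rounds G S t} with hτdef
  have hne : ∀ x : V, {t | x ∈ Rounds G S t}.Nonempty := fun x => reach_rounds G S (hprop x)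
  have hmem : ∀ x, x ∈ Rounds G S (τ x) := fun x => Nat.sInf_mem (hne x)
  have hle : ∀ x t, x ∈ Rounds G S t → τ x ≤ t := fun x t h => Nat.sInf_le h
  have hzero : ∀ x, τ x = 0 → x ∈ S := by
    intro x h; have h2 := hmem x; rwa [h] at h2
  have hpos : ∀ w, w ∉ S → 1 ≤ τ w := by
    intro w hw
    by_contra h; push_neg at h
    exact hw (hzero w (by omega))
  have hforce : ∀ w, ∃ v, (w ∈ S → v = w) ∧ (w ∉ S →
      G.Adj v w ∧ v ∈ Rounds G S (τ w - 1) ∧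
      ∀ x, G.Adj v x → x ≠ w → x ∈ Rounds G S (τ w - 1)) := by
    intro w
    by_cases hw : w ∈ S
    · exact ⟨w, fun _ => rfl, fun h => absurd hw h⟩
    · have h1 : 1 ≤ τ w := hpos w hw
      have h2 : w ∈ Rounds G S (τ w - 1 + 1) := by
        have h3 := hmem w
        have h4 : τ w - 1 + 1 = τ w := by omega
        rwa [h4]
      have h3 : w ∉ Rounds G S (τ w - 1) := by
        intro hmem'
        have := hle w _ hmem'; omega
      rcases h2 with h2 | ⟨v, hv, hadj, hall⟩
      · exact absurd h2 h3
      · exact ⟨v, fun h => absurd h hw, fun _ => ⟨hadj, hv, hall⟩⟩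
  choose f hfS hf using hforce
  have hadjf : ∀ w, w ∉ S → G.Adj (f w) w := fun w hw => (hf w hw).1
  have hdec : ∀ w, w ∉ S → τ (f w) < τ w := by
    intro w hw
    have h1 := hle (f w) _ (hf w hw).2.1
    have h2 := hpos w hw; omega
  have hdecx : ∀ w, w ∉ S → ∀ x, G.Adj (f w) x → x ≠ w → τ x < τ w := by
    intro w hw x h1 h2
    have h3 := hle x _ ((hf w hw).2.2 x h1 h2)
    have h4 := hpos w hw; omega
  have hfix : ∀ w ∈ S, f w = w := fun w hw => hfS w hw
  have hinj : ∀ w1 w2, w1 ∉ S → w2 ∉ S → f w1 = f w2 → w1 = w2 := by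
    intro w1 w2 h1 h2 heq
    by_contra hne'
    have a1 : τ w2 < τ w1 := hdecx w1 h1 w2 (by rw [heq]; exact hadjf w2 h2) (Ne.symm hne')
    have a2 : τ w1 < τ w2 := hdecx w2 h2 w1 (by rw [← heq]; exact hadjf w1 h1) hne'
    omega
  have hfixk : ∀ k w, w ∈ S → f^[k] w = w := by
    intro k
    induction k with
    | zero => intro w _; rfl
    | succ k ih => intro w hw; rw [Function.iterate_succ_apply, hfix w hw, ih w hw]
  have hterm : ∀ k w, τ w ≤ k → f^[k] w ∈ S := by
    intro k
    induction k with
    | zero => intro w h; exact hzero w (Nat.le_zero.mp h)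
    | succ k ih =>
      intro w h
      by_cases hw : w ∈ S
      · rw [hfixk (k+1) w hw]; exact hw
      · rw [Function.iterate_succ_apply]
        exact ih (f w) (by have := hdec w hw; omega)
  set N : ℕ := Finset.univ.sup τ with hN
  have hτN : ∀ w, τ w ≤ N := fun w => Finset.le_sup (Finset.mem_univ w)
  set h : V → V := fun w => f^[N+1] w with hh
  have hhS : ∀ w, h w ∈ S := fun w => hterm (N+1) w (by have := hτN w; omega)
  have hstep : ∀ w, h (f w) = h w := by
    intro w
    show f^[N+1] (f w) = f^[N+1] w
    rw [← Function.iterate_succ_apply, Function.iterate_succ_apply']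
    exact hfix _ (hhS w)
  -- merging lemma
  have hmerge : ∀ m w1 w2, w1 ∉ S → w2 ∉ S → τ w1 + τ w2 ≤ m → h w1 = h w2 →
      (∃ k, f^[k] w1 = w2) ∨ (∃ k, f^[k] w2 = w1) := by
    intro m
    induction m with
    | zero =>
      intro w1 w2 h1 _ hm _
      exfalso; have := hpos w1 h1; omega
    | succ m ih =>
      intro w1 w2 h1 h2 hm heq
      by_cases hf1 : f w1 ∈ S
      · by_cases hf2 : f w2 ∈ S
        · have e1 : h w1 = f w1 := by
            show f^[N+1] w1 = f w1
            rw [Function.iterate_succ_apply]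
            exact hfixk N (f w1) hf1
          have e2 : h w2 = f w2 := by
            show f^[N+1] w2 = f w2
            rw [Function.iterate_succ_apply]
            exact hfixk N (f w2) hf2
          have e3 : f w1 = f w2 := by rw [← e1, ← e2, heq]
          exact Or.inl ⟨0, hinj w1 w2 h1 h2 e3⟩
        · have hsum : τ w1 + τ (f w2) ≤ m := by
            have d1 := hdec w2 h2
            have d2 := hpos w2 h2
            omega
          have heq' : h w1 = h (f w2) := heq.trans (hstep w2).symm
          rcases ih w1 (f w2) h1 hf2 hsum heq' with ⟨k, hk⟩ | ⟨k, hk⟩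
          · cases k with
            | zero => exact Or.inr ⟨1, hk.symm⟩
            | succ k' =>
              have hx : f^[k'] w1 ∉ S := by
                intro hmem'
                apply hf2
                rw [← hk, Function.iterate_succ_apply', hfix _ hmem']
                exact hmem'
              have hk2 : f (f^[k'] w1) = f w2 :=
                (Function.iterate_succ_apply' f k' w1).symm.trans hk
              exact Or.inl ⟨k', hinj _ _ hx h2 hk2⟩
          · exact Or.inr ⟨k+1, by rw [Function.iterate_succ_apply]; exact hk⟩
      · have hsum : τ (f w1) + τ w2 ≤ m := by
          have d1 := hdec w1 h1
          have d2 := hpos w1 h1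
          omega
        have heq' : h (f w1) = h w2 := (hstep w1).trans heq
        rcases ih (f w1) w2 hf1 h2 hsum heq' with ⟨k, hk⟩ | ⟨k, hk⟩
        · exact Or.inl ⟨k+1, by rw [Function.iterate_succ_apply]; exact hk⟩
        · cases k with
          | zero => exact Or.inl ⟨1, hk.symm⟩
          | succ k' =>
            have hx : f^[k'] w2 ∉ S := by
              intro hmem'
              apply hf1
              rw [← hk, Function.iterate_succ_apply', hfix _ hmem']
              exact hmem'
            have hk2 : f (f^[k'] w2) = f w1 :=
              (Function.iterate_succ_apply' f k' w2).symm.trans hk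
            exact Or.inr ⟨k', hinj _ _ hx h1 hk2⟩
  refine ⟨f, h, τ, hadjf, hdec, hhS, ?_⟩
  intro w1 w2 h1 h2 hne' heq
  rcases hmerge (τ w1 + τ w2) w1 w2 h1 h2 le_rfl heq with ⟨k, hk⟩ | ⟨k, hk⟩
  · cases k with
    | zero => exact absurd hk hne'
    | succ k' =>
      right
      refine ⟨f^[k'] w1, ?_, ?_⟩
      · intro hmem'
        apply h2
        rw [← hk, Function.iterate_succ_apply', hfix _ hmem']
        exact hmem'
      · exact (Function.iterate_succ_apply' f k' w1).symm.trans hk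
  · cases k with
    | zero => exact absurd hk.symm hne'
    | succ k' =>
      left
      refine ⟨f^[k'] w2, ?_, ?_⟩
      · intro hmem'
        apply h1
        rw [← hk, Function.iterate_succ_apply', hfix _ hmem']
        exact hmem'
      · exact (Function.iterate_succ_apply' f k' w2).symm.trans hk

end Abstract

lemma comb_adj {n : ℕ} {a b : Fin n × Fin 2} :
    (comb n 2).Adj a b ↔ a ≠ b ∧
      ((a.2.val = 0 ∧ b.2.val = 0 ∧ a.1.val + 1 = b.1.val) ∨
       (a.1 = b.1 ∧ a.2.val + 1 = b.2.val) ∨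
       (b.2.val = 0 ∧ a.2.val = 0 ∧ b.1.val + 1 = a.1.val) ∨
       (b.1 = a.1 ∧ b.2.val + 1 = a.2.val)) := by
  unfold comb
  rw [SimpleGraph.fromRel_adj]
  tauto

lemma pendant_nbr {n : ℕ} {i : Fin n} {x : Fin n × Fin 2}
    (h : (comb n 2).Adj x (i, (1 : Fin 2))) : x = (i, (0 : Fin 2)) := by
  rw [comb_adj] at h
  obtain ⟨hne, hc⟩ := h
  have hx2 : x.2.val < 2 := x.2.isLt
  have h1v : ((1 : Fin 2) : ℕ) = 1 := rfl
  rcases hc with ⟨_, h0, _⟩ | ⟨h1, h2'⟩ | ⟨h0, _, _⟩ | ⟨_, h2'⟩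
  · simp [h1v] at h0
  · have hx0 : x.2.val = 0 := by simp [h1v] at h2'; omega
    exact Prod.ext h1 (Fin.ext hx0)
  · simp [h1v] at h0
  · simp [h1v] at h2'; omega

lemma bone_nbr {n : ℕ} {i : Fin n} {x : Fin n × Fin 2}
    (h : (comb n 2).Adj x (i, (0 : Fin 2))) :
    x = (i, (1 : Fin 2)) ∨ (x.2.val = 0 ∧ (x.1.val + 1 = i.val ∨ i.val + 1 = x.1.val)) := by
  rw [comb_adj] at h
  obtain ⟨hne, hc⟩ := h
  have hx2 : x.2.val < 2 := x.2.isLt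
  have h0v : ((0 : Fin 2) : ℕ) = 0 := rfl
  rcases hc with ⟨ha, _, hb⟩ | ⟨h1, h2'⟩ | ⟨_, ha, hb⟩ | ⟨h1, h2'⟩
  · exact Or.inr ⟨ha, Or.inl hb⟩
  · simp [h0v] at h2'
  · exact Or.inr ⟨ha, Or.inr hb⟩
  · left
    have : x.2.val = 1 := by simp [h0v] at h2'; omega
    exact Prod.ext h1.symm (Fin.ext this)

lemma adj_pb {n : ℕ} (i : Fin n) : (comb n 2).Adj (i, (1 : Fin 2)) (i, (0 : Fin 2)) := by
  rw [comb_adj]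
  refine ⟨?_, Or.inr (Or.inr (Or.inr ⟨rfl, rfl⟩))⟩
  intro hc
  have := congrArg Prod.snd hc
  simp at this

lemma adj_bb {n : ℕ} (i j : Fin n) (hij : i.val + 1 = j.val) :
    (comb n 2).Adj (i, (0 : Fin 2)) (j, (0 : Fin 2)) := by
  rw [comb_adj]
  refine ⟨?_, Or.inl ⟨rfl, rfl, hij⟩⟩
  intro hc
  have := congrArg (fun p => (Prod.fst p).val) hc
  simp at this
  omega

/-- The proposed minimum propagating set: pendants at even bone positions. -/
def combS (n : ℕ) : Set (Fin n × Fin 2) := {p | Even p.1.val ∧ p.2 = 1}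

lemma reach_pend_even {n : ℕ} (i : Fin n) (h : Even i.val) :
    PropReach (comb n 2) (combS n) (i, (1 : Fin 2)) :=
  .base ⟨h, rfl⟩

lemma reach_bone_even {n : ℕ} (i : Fin n) (h : Even i.val) :
    PropReach (comb n 2) (combS n) (i, (0 : Fin 2)) := by
  refine .step (reach_pend_even i h) (adj_pb i) ?_
  intro x hadj hne
  exact absurd (pendant_nbr hadj.symm) hne

lemma reach_bone_aux {n : ℕ} (m : ℕ) : ∀ i : Fin n, i.val ≤ m →
    PropReach (comb n 2) (combS n) (i, (0 : Fin 2)) := by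
  induction m with
  | zero =>
    intro i hi
    have h0 : i.val = 0 := Nat.le_zero.mp hi
    exact reach_bone_even i (by rw [h0]; exact Even.zero)
  | succ m ih =>
    intro i hi
    rcases Nat.even_or_odd i.val with he | ho
    · exact reach_bone_even i he
    · have h1 : 1 ≤ i.val := by
        rcases ho with ⟨k, hk⟩; omega
    
      set j : Fin n := ⟨i.val - 1, by have := i.isLt; omega⟩ with hj
      have hje : Even j.val := by
        rcases ho with ⟨k, hk⟩
        exact ⟨k, by simp [hj]; omega⟩
      refine .step (reach_bone_even j hje) (adj_bb j i (by simp [hj]; omega)) ?_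
      intro x hadj hne
      rcases bone_nbr hadj.symm with hx | ⟨hx0, hx1 | hx1⟩
      · rw [hx]; exact reach_pend_even j hje
      · have hxeq : x = (x.1, (0 : Fin 2)) := Prod.ext rfl (Fin.ext hx0)
        rw [hxeq]
        exact ih x.1 (by simp [hj] at hx1; omega)
      · exfalso
        apply hne
        have hx1i : x.1 = i := Fin.ext (by simp [hj] at hx1; omega)
        rw [← hx1i]
        exact Prod.ext rfl (Fin.ext hx0)

lemma reach_bone {n : ℕ} (i : Fin n) :
    PropReach (comb n 2) (combS n) (i, (0 : Fin 2)) :=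
  reach_bone_aux i.val i le_rfl

lemma reach_pend {n : ℕ} (i : Fin n) :
    PropReach (comb n 2) (combS n) (i, (1 : Fin 2)) := by
  rcases Nat.even_or_odd i.val with he | ho
  · exact reach_pend_even i he
  · refine .step (reach_bone i) (adj_pb i).symm ?_
    intro x hadj hne
    rcases bone_nbr hadj.symm with hx | ⟨hx0, _⟩
    · exact absurd hx hne
    · have hxeq : x = (x.1, (0 : Fin 2)) := Prod.ext rfl (Fin.ext hx0)
      rw [hxeq]
      exact reach_bone x.1

lemma comb_propagates (n : ℕ) : Propagates (comb n 2) (combS n) := by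
  intro p
  obtain ⟨i, j⟩ := p
  have hj : j = 0 ∨ j = 1 := by
    have h2 := j.isLt
    have : j.val = 0 ∨ j.val = 1 := by omega
    rcases this with h | h
    · exact Or.inl (Fin.ext h)
    · exact Or.inr (Fin.ext h)
  rcases hj with rfl | rfl
  · exact reach_bone i
  · exact reach_pend i

lemma card_range_even (n : ℕ) :
    ((Finset.range n).filter (fun k => Even k)).card = (n + 1) / 2 := by
  induction n with
  | zero => rfl
  | succ m ih =>
    rw [Finset.range_add_one, Finset.filter_insert]
    by_cases h : Even m
    · rw [if_pos h, Finset.card_insert_of_notMem (by simp), ih]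
      rw [Nat.even_iff] at h
      omega
    · rw [if_neg h, ih]
      rw [Nat.not_even_iff] at h
      omega

lemma mk_one_injective {n : ℕ} : Function.Injective (fun i : Fin n => (i, (1 : Fin 2))) := by
  intro a b hab
  exact congrArg Prod.fst hab

lemma card_combS (n : ℕ) : (combS n).ncard = (n + 1) / 2 := by
  classical
  have h1 : combS n = (fun i : Fin n => (i, (1 : Fin 2))) '' {i : Fin n | Even i.val} := by
    ext p
    constructor
    · rintro ⟨he, hp2⟩
      exact ⟨p.1, he, Prod.ext rfl hp2.symm⟩
    · rintro ⟨i, hi, rfl⟩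
      exact ⟨hi, rfl⟩
  rw [h1, Set.ncard_image_of_injective _ mk_one_injective]
  have h2 : {i : Fin n | Even i.val} = ↑(Finset.univ.filter (fun i : Fin n => Even i.val)) := by
    ext i; simp
  rw [h2, Set.ncard_coe_finset]
  have h3 : (Finset.univ.filter (fun i : Fin n => Even i.val)).card
      = ((Finset.range n).filter (fun k => Even k)).card := by
    refine Finset.card_bij' (fun a _ => a.val) (fun k hk => ⟨k, ?_⟩) ?_ ?_ ?_ ?_
    · simp only [Finset.mem_filter, Finset.mem_range] at hk
      exact hk.1
    · intro a ha
      simp only [Finset.mem_filter, Finset.mem_univ, true_and] at ha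
      simp only [Finset.mem_filter, Finset.mem_range]
      exact ⟨a.isLt, ha⟩
    · intro k hk
      simp only [Finset.mem_filter, Finset.mem_range] at hk
      simp only [Finset.mem_filter, Finset.mem_univ, true_and]
      exact hk.2
    · intro a ha; rfl
    · intro k hk; rfl
  rw [h3, card_range_even]

lemma card_pendants (n : ℕ) : ({p : Fin n × Fin 2 | p.2 = 1}).ncard = n := by
  have h1 : {p : Fin n × Fin 2 | p.2 = 1} = (fun i : Fin n => (i, (1 : Fin 2))) '' Set.univ := by
    ext p
    constructor
    · intro hp
      exact ⟨p.1, Set.mem_univ _, Prod.ext rfl hp.symm⟩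
    · rintro ⟨i, _, rfl⟩
      rfl
  rw [h1, Set.ncard_image_of_injective _ mk_one_injective, Set.ncard_univ,
    Nat.card_eq_fintype_card, Fintype.card_fin]

lemma comb_lower {n : ℕ} (S : Set (Fin n × Fin 2)) (hp : Propagates (comb n 2) S) :
    n ≤ 2 * S.ncard := by
  classical
  obtain ⟨f, h, τ, hadjf, hdec, hhS, hmerge⟩ := key (comb n 2) S hp
  have hC : ∀ q : Fin n × Fin 2, q.2 = 1 → q ∉ S → ∀ x, x ∉ S → f x ≠ q := by
    intro q hq hqS x hxS hfx
    have hq' : q = (q.1, (1 : Fin 2)) := Prod.ext rfl hq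
    have h1 : (comb n 2).Adj q x := by rw [← hfx]; exact hadjf x hxS
    have hx : x = (q.1, (0 : Fin 2)) := pendant_nbr (by rw [← hq']; exact h1.symm)
    have h2 : (comb n 2).Adj (f q) q := hadjf q hqS
    have hfq : f q = (q.1, (0 : Fin 2)) := pendant_nbr (by rw [← hq']; exact h2)
    have d1 : τ (f x) < τ x := hdec x hxS
    have d2 : τ (f q) < τ q := hdec q hqS
    rw [hfx] at d1
    rw [hfq, ← hx] at d2
    omega
  have hinj : Set.InjOn h ({p : Fin n × Fin 2 | p.2 = 1} \ S) := by
    intro p hp' q hq' heq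
    by_contra hne
    rcases hmerge p q hp'.2 hq'.2 hne heq with ⟨x, hx, hfx⟩ | ⟨x, hx, hfx⟩
    · exact hC p hp'.1 hp'.2 x hx hfx
    · exact hC q hq'.1 hq'.2 x hx hfx
  have himg : h '' ({p : Fin n × Fin 2 | p.2 = 1} \ S) ⊆ S := by
    rintro _ ⟨w, _, rfl⟩
    exact hhS w
  have c1 : ({p : Fin n × Fin 2 | p.2 = 1} \ S).ncard ≤ S.ncard := by
    rw [← Set.ncard_image_of_injOn hinj]
    exact Set.ncard_le_ncard himg (Set.toFinite S)
  have c2 : ({p : Fin n × Fin 2 | p.2 = 1} ∩ S).ncard ≤ S.ncard :=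
    Set.ncard_le_ncard Set.inter_subset_right (Set.toFinite S)
  have c3 := Set.ncard_inter_add_ncard_diff_eq_ncard {p : Fin n × Fin 2 | p.2 = 1} S
  have c4 := card_pendants n
  omega


/-- For `n ≥ 1`, the comb `P_{n,2}` (a path on `n` vertices with one pendant
vertex attached to each path vertex, `2n` vertices in total) satisfies `π(P_{n,2}) = n/2`
when `n` is even and `π(P_{n,2}) = ⌈n/2⌉` when `n` is odd; i.e. `π(P_{n,2}) = ⌈n/2⌉`. -/
theorem propNum_comb_two (n : ℕ) (hn : 1 ≤ n) :
    (Even n → propNum (comb n 2) = n / 2) ∧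
    (Odd n → propNum (comb n 2) = (n + 1) / 2) ∧
    propNum (comb n 2) = (n + 1) / 2 := by
  have hprop : Propagates (comb n 2) (combS n) := comb_propagates n
  have hmain : propNum (comb n 2) = (n + 1) / 2 := by
    unfold propNum
    apply le_antisymm
    · exact Nat.sInf_le ⟨combS n, card_combS n, hprop⟩
    · refine le_csInf ⟨(n + 1) / 2, combS n, card_combS n, hprop⟩ ?_
      rintro m ⟨S, rfl, hp⟩
      have := comb_lower S hp
      omega
  refine ⟨fun he => ?_, fun _ => hmain, hmain⟩
  rw [hmain]
  rw [Nat.even_iff] at he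
  omega
end

section
/- For every n ≥ 1 and every k ≥ 2, the comb P_{n,k} satisfies π(P_{n,k}) = π(P_{n,2}); that is, the minimum size of a propagating set of a comb does not depend on the length of the fingers. -/
lemma pair_eq {n k : ℕ} {a b : Fin n × Fin k} : a = b ↔ a.1.val = b.1.val ∧ a.2.val = b.2.val := by
  simp [Prod.ext_iff, Fin.ext_iff]

lemma comb_adj_val {n k : ℕ} {a b : Fin n × Fin k} : (comb n k).Adj a b ↔
    (a.1.val = b.1.val ∧ (a.2.val + 1 = b.2.val ∨ b.2.val + 1 = a.2.val)) ∨
    (a.2.val = 0 ∧ b.2.val = 0 ∧ (a.1.val + 1 = b.1.val ∨ b.1.val + 1 = a.1.val)) := by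
  simp only [comb, SimpleGraph.fromRel_adj, ne_eq, Prod.ext_iff, Fin.ext_iff]
  omega

lemma chainDown {n k : ℕ} (hk : 2 ≤ k) (S : Set (Fin n × Fin k)) (i : Fin n)
    (htip : PropReach (comb n k) S (i, ⟨k-1, by omega⟩)) (j : Fin k) :
    PropReach (comb n k) S (i, j) := by
  have key : ∀ d : ℕ, ∀ j : Fin k, j.val + d = k - 1 → PropReach (comb n k) S (i, j) := by
    intro d
    induction d using Nat.strong_induction_on with
    | _ d ih =>
      intro j hj
      match d with
      | 0 =>
        have he : j = ⟨k-1, by omega⟩ := by rw [Fin.ext_iff]; simpa using hj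
        rw [he]; exact htip
      | d+1 =>
        have hlt : j.val + 1 < k := by omega
        have hv : PropReach (comb n k) S (i, ⟨j.val+1, hlt⟩) :=
          ih d (by omega) _ (by simp; try omega)
        refine PropReach.step hv ?_ ?_
        · rw [comb_adj_val]; simp; try omega
        · intro x hx hxw
          rw [comb_adj_val] at hx
          rw [ne_eq, pair_eq] at hxw
          simp only [] at hx hxw
          have hb : x.2.val < k := x.2.isLt
          have h1 : x.1.val = i.val ∧ x.2.val = j.val + 2 := by
            simp at hx hxw; try omega
          have hd : 1 ≤ d := by omega
          have he : x = (i, ⟨j.val+2, by omega⟩) := by rw [pair_eq]; simp; try omega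
          rw [he]
          exact ih (d-1) (by omega) _ (by simp; try omega)
  exact key (k - 1 - j.val) j (by have := j.isLt; omega)

lemma chainUp {n k : ℕ} (hk : 2 ≤ k) (S : Set (Fin n × Fin k)) (i : Fin n)
    (h0 : PropReach (comb n k) S (i, ⟨0, by omega⟩))
    (h1 : PropReach (comb n k) S (i, ⟨1, by omega⟩)) (j : Fin k) :
    PropReach (comb n k) S (i, j) := by
  have key : ∀ d : ℕ, ∀ j : Fin k, j.val = d → PropReach (comb n k) S (i, j) := by
    intro d
    induction d using Nat.strong_induction_on with
    | _ d ih =>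
      intro j hj
      match d with
      | 0 => have he : j = ⟨0, by omega⟩ := by rw [Fin.ext_iff]; simpa using hj
             rw [he]; exact h0
      | 1 => have he : j = ⟨1, by omega⟩ := by rw [Fin.ext_iff]; simpa using hj
             rw [he]; exact h1
      | d+2 =>
        have hb : j.val < k := j.isLt
        have hv : PropReach (comb n k) S (i, ⟨d+1, by omega⟩) :=
          ih (d+1) (by omega) _ (by simp)
        refine PropReach.step hv ?_ ?_
        · rw [comb_adj_val]; simp; try omega
        · intro x hx hxw
          rw [comb_adj_val] at hx
          rw [ne_eq, pair_eq] at hxw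
          have he : x = (i, ⟨d, by omega⟩) := by rw [pair_eq]; simp at hx hxw ⊢; omega
          rw [he]
          exact ih d (by omega) _ (by simp)
  exact key j.val j rfl

def fmap {n k : ℕ} (p : Fin n × Fin k) : Fin n × Fin 2 := (p.1, ⟨min p.2.val 1, by omega⟩)

lemma fmap_fst {n k : ℕ} (p : Fin n × Fin k) : (fmap p).1 = p.1 := rfl
lemma fmap_snd {n k : ℕ} (p : Fin n × Fin k) : (fmap p).2.val = min p.2.val 1 := rfl

lemma sim_fwd {n k : ℕ} (hk : 2 ≤ k) (S : Set (Fin n × Fin k)) (v : Fin n × Fin k)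
    (h : PropReach (comb n k) S v) : PropReach (comb n 2) (fmap '' S) (fmap v) := by
  induction h with
  | base hv => exact .base ⟨_, hv, rfl⟩
  | @step v w hv hadj hall ihv ihall =>
    rw [comb_adj_val] at hadj
    by_cases hv0 : v.2.val = 0
    · by_cases hw0 : w.2.val = 0
      · -- bone edge
        refine PropReach.step ihv ?_ ?_
        · rw [comb_adj_val]; simp [fmap_fst, fmap_snd]; omega
        · intro x' hx' hxw'
          rw [comb_adj_val] at hx'
          rw [ne_eq, pair_eq] at hxw'
          simp only [fmap_fst, fmap_snd] at hx' hxw'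
          have hb2 : x'.2.val < 2 := x'.2.isLt
          by_cases hx2 : x'.2.val = 0
          · -- bone neighbour
            have hr := ihall (x'.1, ⟨0, by omega⟩)
              (by rw [comb_adj_val]; simp; omega) (by rw [ne_eq, pair_eq]; simp; omega)
            have he : fmap ((x'.1, ⟨0, by omega⟩) : Fin n × Fin k) = x' := by
              rw [pair_eq]; simp [fmap_fst, fmap_snd]; omega
            rwa [he] at hr
          · -- finger neighbour (v.1, 1)
            have hr := ihall (v.1, ⟨1, by omega⟩)
              (by rw [comb_adj_val]; simp; omega) (by rw [ne_eq, pair_eq]; simp; omega)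
            have he : fmap ((v.1, ⟨1, by omega⟩) : Fin n × Fin k) = x' := by
              rw [pair_eq]; simp [fmap_fst, fmap_snd]; omega
            rwa [he] at hr
      · -- finger edge upward: v.2 = 0, w.2 = 1
        have hw1 : w.2.val = 1 ∧ w.1.val = v.1.val := by omega
        refine PropReach.step ihv ?_ ?_
        · rw [comb_adj_val]; simp [fmap_fst, fmap_snd]; omega
        · intro x' hx' hxw'
          rw [comb_adj_val] at hx'
          rw [ne_eq, pair_eq] at hxw'
          simp only [fmap_fst, fmap_snd] at hx' hxw'
          have hb2 : x'.2.val < 2 := x'.2.isLt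
          -- x' must be a bone neighbour
          have hx2 : x'.2.val = 0 := by omega
          have hr := ihall (x'.1, ⟨0, by omega⟩)
            (by rw [comb_adj_val]; simp; omega) (by rw [ne_eq, pair_eq]; simp; omega)
          have he : fmap ((x'.1, ⟨0, by omega⟩) : Fin n × Fin k) = x' := by
            rw [pair_eq]; simp [fmap_fst, fmap_snd]; omega
          rwa [he] at hr
    · by_cases hw0 : w.2.val = 0
      · -- finger edge downward: v.2 = 1, w.2 = 0
        have hv1 : v.2.val = 1 ∧ v.1.val = w.1.val := by omega
        refine PropReach.step ihv ?_ ?_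
        · rw [comb_adj_val]; simp [fmap_fst, fmap_snd]; omega
        · intro x' hx' hxw'
          rw [comb_adj_val] at hx'
          rw [ne_eq, pair_eq] at hxw'
          simp only [fmap_fst, fmap_snd] at hx' hxw'
          have hb2 : x'.2.val < 2 := x'.2.isLt
          exact absurd trivial (by omega)
      · -- interior finger edge: fmap v = fmap w
        have he : fmap w = fmap v := by rw [pair_eq]; simp [fmap_fst, fmap_snd]; omega
        rw [he]; exact ihv

def gmap {n k : ℕ} (hk : 2 ≤ k) (p : Fin n × Fin 2) : Fin n × Fin k :=
  (p.1, ⟨p.2.val * (k-1), by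
    calc p.2.val * (k-1) ≤ 1 * (k-1) := Nat.mul_le_mul_right _ (by have := p.2.isLt; omega)
      _ < k := by omega⟩)

lemma gmap_eq0 {n k : ℕ} (hk : 2 ≤ k) (p : Fin n × Fin 2) (h : p.2.val = 0) :
    gmap hk p = (p.1, ⟨0, by omega⟩) := by
  rw [pair_eq]; exact ⟨rfl, by simp [gmap, h]⟩

lemma gmap_eq1 {n k : ℕ} (hk : 2 ≤ k) (p : Fin n × Fin 2) (h : p.2.val ≠ 0) :
    gmap hk p = (p.1, ⟨k-1, by omega⟩) := by
  have h1 : p.2.val = 1 := by have := p.2.isLt; omega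
  rw [pair_eq]; exact ⟨rfl, by simp [gmap, h1]⟩

lemma gmap_inj {n k : ℕ} (hk : 2 ≤ k) : Function.Injective (gmap (n := n) hk) := by
  intro a b h
  have ha := a.2.isLt
  have hb := b.2.isLt
  by_cases h0 : a.2.val = 0 <;> by_cases h1 : b.2.val = 0 <;>
    [rw [gmap_eq0 hk a h0, gmap_eq0 hk b h1] at h;
     rw [gmap_eq0 hk a h0, gmap_eq1 hk b h1] at h;
     rw [gmap_eq1 hk a h0, gmap_eq0 hk b h1] at h;
     rw [gmap_eq1 hk a h0, gmap_eq1 hk b h1] at h] <;>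
    rw [pair_eq] at h ⊢ <;> simp at h ⊢ <;> omega

lemma sim_bwd {n k : ℕ} (hk : 2 ≤ k) (S : Set (Fin n × Fin 2)) (v : Fin n × Fin 2)
    (h : PropReach (comb n 2) S v) : PropReach (comb n k) (gmap hk '' S) (gmap hk v) := by
  induction h with
  | base hv => exact .base ⟨_, hv, rfl⟩
  | @step v w hv hadj hall ihv ihall =>
    rw [comb_adj_val] at hadj
    have hv2 := v.2.isLt
    have hw2 := w.2.isLt
    by_cases hv0 : v.2.val = 0
    · rw [gmap_eq0 hk v hv0] at ihv
      by_cases hw0 : w.2.val = 0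
      · -- bone edge
        rw [gmap_eq0 hk w hw0]
        refine PropReach.step ihv ?_ ?_
        · rw [comb_adj_val]; simp; omega
        · intro x hx hxw
          rw [comb_adj_val] at hx
          rw [ne_eq, pair_eq] at hxw
          simp only [] at hx hxw
          simp at hx hxw
          by_cases hx2 : x.2.val = 0
          · -- bone neighbour of (v.1, 0)
            have hr := ihall (x.1, ⟨0, by omega⟩)
              (by rw [comb_adj_val]; simp; omega) (by rw [ne_eq, pair_eq]; simp; omega)
            rw [gmap_eq0 hk _ (by simp)] at hr
            have he : ((x.1, ⟨0, by omega⟩) : Fin n × Fin k) = x := by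
              rw [pair_eq]; simp; omega
            rwa [he] at hr
          · -- x = (v.1, 1) in the big comb; use the tip and chain down
            have hxx : x.1.val = v.1.val ∧ x.2.val = 1 := by omega
            have hr := ihall (v.1, ⟨1, by omega⟩)
              (by rw [comb_adj_val]; simp; omega) (by rw [ne_eq, pair_eq]; simp; omega)
            rw [gmap_eq1 hk _ (by simp)] at hr
            have := chainDown hk _ v.1 hr x.2
            have he2 : (v.1, x.2) = x := by rw [pair_eq]; simp; omega
            rwa [he2] at this
      · -- finger edge upward: v = (i,0), w = (i,1); gmap w = tip
        have hw1 : w.2.val = 1 ∧ w.1.val = v.1.val := by omega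
        have h1 : PropReach (comb n k) (gmap hk '' S) (v.1, ⟨1, by omega⟩) := by
          refine PropReach.step ihv ?_ ?_
          · rw [comb_adj_val]; simp
          · intro x hx hxw
            rw [comb_adj_val] at hx
            rw [ne_eq, pair_eq] at hxw
            simp at hx hxw
            have hx2 : x.2.val = 0 := by omega
            have hr := ihall (x.1, ⟨0, by omega⟩)
              (by rw [comb_adj_val]; simp; omega) (by rw [ne_eq, pair_eq]; simp; omega)
            rw [gmap_eq0 hk _ (by simp)] at hr
            have he : ((x.1, ⟨0, by omega⟩) : Fin n × Fin k) = x := by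
              rw [pair_eq]; simp; omega
            rwa [he] at hr
        have h0 : PropReach (comb n k) (gmap hk '' S) (v.1, ⟨0, by omega⟩) := ihv
        have := chainUp hk _ v.1 h0 h1 ⟨k-1, by omega⟩
        rw [gmap_eq1 hk w (by omega)]
        have he2 : ((w.1, ⟨k-1, by omega⟩) : Fin n × Fin k) = (v.1, ⟨k-1, by omega⟩) := by
          rw [pair_eq]; simp; omega
        rwa [he2]
    · -- v = (i,1): gmap v is the tip, chain down gives everything
      rw [gmap_eq1 hk v hv0] at ihv
      have := chainDown hk _ v.1 ihv (gmap hk w).2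
      have he2 : (v.1, (gmap hk w).2) = gmap hk w := by
        have hw0 : w.2.val = 0 := by omega
        rw [gmap_eq0 hk w hw0, pair_eq]; simp; omega
      rwa [he2] at this
lemma propNum_set_nonempty {V : Type*} (G : SimpleGraph V) :
    {n : ℕ | ∃ S : Set V, S.ncard = n ∧ Propagates G S}.Nonempty :=
  ⟨(Set.univ : Set V).ncard, Set.univ, rfl, fun v => .base (Set.mem_univ v)⟩


/-- For every `n ≥ 1` and `k ≥ 2`, the comb `P_{n,k}` satisfies
`π(P_{n,k}) = π(P_{n,2})`: the minimum size of a propagating set of a comb does not depend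
on the length of the fingers. -/
theorem propNum_comb_eq_comb_two (n k : ℕ) (hn : 1 ≤ n) (hk : 2 ≤ k) :
    propNum (comb n k) = propNum (comb n 2) := by
  apply le_antisymm
  · -- propNum big ≤ propNum small, via gmap
    obtain ⟨S, hS, hprop⟩ := Nat.sInf_mem (propNum_set_nonempty (comb n 2))
    have hg : Propagates (comb n k) (gmap hk '' S) := by
      intro v
      have h1 := sim_bwd hk S (v.1, 1) (hprop (v.1, 1))
      rw [gmap_eq1 hk _ (by simp)] at h1
      have := chainDown hk _ v.1 h1 v.2
      simpa using this
    calc propNum (comb n k) ≤ (gmap hk '' S).ncard := Nat.sInf_le ⟨_, rfl, hg⟩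
      _ = S.ncard := Set.ncard_image_of_injective _ (gmap_inj hk)
      _ = propNum (comb n 2) := hS
  · -- propNum small ≤ propNum big, via fmap
    obtain ⟨S, hS, hprop⟩ := Nat.sInf_mem (propNum_set_nonempty (comb n k))
    have hf : Propagates (comb n 2) (fmap '' S) := by
      intro v'
      have hsurj : fmap ((v'.1, ⟨v'.2.val, by have := v'.2.isLt; omega⟩) : Fin n × Fin k) = v' := by
        rw [pair_eq]; simp [fmap]; have := v'.2.isLt; omega
      rw [← hsurj]
      exact sim_fwd hk S _ (hprop _)
    calc propNum (comb n 2) ≤ (fmap '' S).ncard := Nat.sInf_le ⟨_, rfl, hf⟩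
      _ ≤ S.ncard := Set.ncard_image_le S.toFinite
      _ = propNum (comb n k) := hS
end

section
/- Let n ≥ 4 and let G be the graph on vertex set {1,...,n} whose edges are the cycle edges {1,2}, {2,3}, ..., {n−1,n}, {1,n} together with the chords {2,i} for every i with 4 ≤ i ≤ n−1 (so G = C_n + ∪_i {2,i} has exactly 2n − 3 edges). Then the two-element set S = {1, n} propagates to G. -/
/-- Let `n ≥ 4` and let `G` be the graph on vertices `{1, …, n}`
(realized as `Fin n`, vertex `i+1` being `⟨i, _⟩`) whose edges are the cycle edges
`{1,2}, …, {n-1,n}, {1,n}` together with the chords `{2, i}` for `4 ≤ i ≤ n - 1`.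
Then the two-element set `S = {1, n}` propagates to `G`. -/
theorem propagates_augmented_cycle (n : ℕ) (hn : 4 ≤ n) :
    Propagates
      (SimpleGraph.fromRel (fun a b : Fin n =>
        a.val + 1 = b.val ∨ (a.val = 0 ∧ b.val = n - 1) ∨
        (a.val = 1 ∧ 3 ≤ b.val ∧ b.val ≤ n - 2)))
      {(⟨0, by omega⟩ : Fin n), ⟨n - 1, by omega⟩} := by
  set G := SimpleGraph.fromRel (fun a b : Fin n =>
        a.val + 1 = b.val ∨ (a.val = 0 ∧ b.val = n - 1) ∨
        (a.val = 1 ∧ 3 ≤ b.val ∧ b.val ≤ n - 2)) with hG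
  set S : Set (Fin n) := {(⟨0, by omega⟩ : Fin n), ⟨n - 1, by omega⟩} with hS
  have adj_iff : ∀ a b : Fin n, G.Adj a b ↔
      a.val ≠ b.val ∧
        ((a.val + 1 = b.val ∨ (a.val = 0 ∧ b.val = n - 1) ∨
          (a.val = 1 ∧ 3 ≤ b.val ∧ b.val ≤ n - 2)) ∨
         (b.val + 1 = a.val ∨ (b.val = 0 ∧ a.val = n - 1) ∨
          (b.val = 1 ∧ 3 ≤ a.val ∧ a.val ≤ n - 2))) := by
    intro a b
    simp [hG, SimpleGraph.fromRel_adj, ne_eq, Fin.ext_iff]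
  have adjmk : ∀ (a b : ℕ) (ha : a < n) (hb : b < n),
      (a ≠ b ∧
        ((a + 1 = b ∨ (a = 0 ∧ b = n - 1) ∨ (a = 1 ∧ 3 ≤ b ∧ b ≤ n - 2)) ∨
         (b + 1 = a ∨ (b = 0 ∧ a = n - 1) ∨ (b = 1 ∧ 3 ≤ a ∧ a ≤ n - 2)))) →
      G.Adj ⟨a, ha⟩ ⟨b, hb⟩ := by
    intro a b ha hb h
    exact (adj_iff _ _).mpr h
  have adjval : ∀ (a : ℕ) (ha : a < n) (x : Fin n), G.Adj ⟨a, ha⟩ x →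
      a ≠ x.val ∧
        ((a + 1 = x.val ∨ (a = 0 ∧ x.val = n - 1) ∨ (a = 1 ∧ 3 ≤ x.val ∧ x.val ≤ n - 2)) ∨
         (x.val + 1 = a ∨ (x.val = 0 ∧ a = n - 1) ∨ (x.val = 1 ∧ 3 ≤ a ∧ a ≤ n - 2))) := by
    intro a ha x h
    exact (adj_iff _ _).mp h
  have castx : ∀ (c : ℕ) (hc : c < n) (x : Fin n), x.val = c →
      PropReach G S ⟨c, hc⟩ → PropReach G S x := by
    intro c hc x hx h
    have : x = ⟨c, hc⟩ := Fin.ext hx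
    rwa [this]
  have castmk : ∀ (a b : ℕ) (ha : a < n) (hb : b < n), a = b →
      PropReach G S ⟨a, ha⟩ → PropReach G S ⟨b, hb⟩ := by
    intro a b ha hb hab h
    exact castx a ha ⟨b, hb⟩ hab.symm h
  have base0 : PropReach G S ⟨0, by omega⟩ := .base (Set.mem_insert _ _)
  have baseN : PropReach G S ⟨n - 1, by omega⟩ := .base (Set.mem_insert_of_mem _ rfl)
  have reach1 : PropReach G S ⟨1, by omega⟩ := by
    refine .step base0 (adjmk 0 1 (by omega) (by omega) (by omega)) ?_
    intro x hx hne
    have h := adjval 0 (by omega) x hx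
    have hne' : x.val ≠ 1 := fun hv => hne (Fin.ext hv)
    have hlt := x.isLt
    exact castx (n - 1) (by omega) x (by omega) baseN
  have reachN2 : PropReach G S ⟨n - 2, by omega⟩ := by
    refine .step baseN (adjmk (n - 1) (n - 2) (by omega) (by omega) (by omega)) ?_
    intro x hx hne
    have h := adjval (n - 1) (by omega) x hx
    have hne' : x.val ≠ n - 2 := fun hv => hne (Fin.ext hv)
    have hlt := x.isLt
    exact castx 0 (by omega) x (by omega) base0
  have aux : ∀ d : ℕ, d ≤ n - 4 →
      PropReach G S ⟨n - 2 - d, by omega⟩ ∧ PropReach G S ⟨n - 1 - d, by omega⟩ := by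
    intro d
    induction d with
    | zero =>
      intro _
      exact ⟨reachN2, castmk (n - 1) (n - 1 - 0) (by omega) (by omega) (by omega) baseN⟩
    | succ d ih =>
      intro hd
      obtain ⟨h2, h1⟩ := ih (by omega)
      have hstep : PropReach G S ⟨n - 2 - (d + 1), by omega⟩ := by
        refine .step h2 (adjmk (n - 2 - d) (n - 2 - (d + 1)) (by omega) (by omega) (by omega)) ?_
        intro x hx hne
        have h := adjval (n - 2 - d) (by omega) x hx
        have hne' : x.val ≠ n - 2 - (d + 1) := fun hv => hne (Fin.ext hv)
        have hlt := x.isLt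
        have hcase : x.val = n - 1 - d ∨ x.val = 1 := by omega
        rcases hcase with hc | hc
        · exact castx (n - 1 - d) (by omega) x hc h1
        · exact castx 1 (by omega) x hc reach1
      exact ⟨hstep, castmk (n - 2 - d) (n - 1 - (d + 1)) (by omega) (by omega) (by omega) h2⟩
  intro v
  have hlt := v.isLt
  rcases Nat.lt_or_ge v.val 2 with h | h
  · rcases Nat.lt_or_ge v.val 1 with h0 | h0
    · exact castx 0 (by omega) v (by omega) base0
    · exact castx 1 (by omega) v (by omega) reach1
  · rcases Nat.lt_or_ge v.val (n - 1) with h1 | h1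
    · exact castx (n - 2 - (n - 2 - v.val)) (by omega) v (by omega)
        (aux (n - 2 - v.val) (by omega)).1
    · exact castx (n - 1) (by omega) v (by omega) baseN
end

section
/- If a finite simple undirected graph G has a Hamilton path, then there exists an orientation D of G (a digraph obtained by assigning a direction to each edge of G) and a single vertex u such that the singleton {u} propagates to D. Specifically, orienting the edges of the Hamilton path forward (from its first vertex u toward its last) and all remaining edges backward (from the later vertex of the path order to the earlier one) yields such an orientation, with P_{{u}}(t) = the first t+1 vertices of the Hamilton path. -/
/-- Propagation closure on a digraph: `w` can be added whenever some vertex `v` already having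
the information has an arc to `w` and every out-neighbour of `v` other than `w` already has
the information. -/
inductive DPropReach {V : Type*} (D : Digraph V) (S : Set V) : V → Prop
  | base {v : V} (hv : v ∈ S) : DPropReach D S v
  | step {v w : V} (hv : DPropReach D S v) (harc : D.Adj v w)
      (hall : ∀ x : V, D.Adj v x → x ≠ w → DPropReach D S x) : DPropReach D S w

/-- `S` propagates to all of the digraph `D`. -/
def DPropagates {V : Type*} (D : Digraph V) (S : Set V) : Prop :=
  ∀ v : V, DPropReach D S v

/-- `D` is an orientation of the simple graph `G`: every arc of `D` lies on an edge of `G`,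
and each edge of `G` is given exactly one of its two possible directions. -/
def IsOrientation {V : Type*} (G : SimpleGraph V) (D : Digraph V) : Prop :=
  (∀ a b : V, D.Adj a b → G.Adj a b) ∧
  (∀ a b : V, G.Adj a b → (D.Adj a b ↔ ¬ D.Adj b a))

/-- The orientation of `G` induced by a Hamilton path `p`: the edges of `p` are oriented
forward (from the first vertex of `p` toward its last), and every remaining edge is oriented
backward (from the later vertex in the path order to the earlier one). -/
def hamOrient {V : Type*} [DecidableEq V] (G : SimpleGraph V) {u w : V} (p : G.Walk u w) :
    Digraph V :=
  ⟨fun a b => G.Adj a b ∧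
    (p.support.idxOf b = p.support.idxOf a + 1 ∨
      (p.support.idxOf b < p.support.idxOf a ∧
        p.support.idxOf a ≠ p.support.idxOf b + 1))⟩

section hamOrient

variable {V : Type*} [DecidableEq V] {G : SimpleGraph V} {u w : V} {p : G.Walk u w}

lemma hamOrient_adj {a b : V} :
    (hamOrient G p).Adj a b ↔ G.Adj a b ∧
      (p.support.idxOf b = p.support.idxOf a + 1 ∨
        (p.support.idxOf b < p.support.idxOf a ∧
          p.support.idxOf a ≠ p.support.idxOf b + 1)) :=
  Iff.rfl

lemma isOrientation_hamOrient (hcover : ∀ v, v ∈ p.support) :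
    IsOrientation G (hamOrient G p) := by
  refine ⟨fun _ _ h => h.1, fun a b hab => ?_⟩
  have hidx : p.support.idxOf a ≠ p.support.idxOf b := fun h =>
    hab.ne ((List.idxOf_inj (hcover a)).mp h)
  simp only [hamOrient_adj, hab, hab.symm, true_and]
  omega

end hamOrient

namespace SimpleGraph.Walk

variable {V : Type*} [DecidableEq V] {G : SimpleGraph V} {u w : V} {p : G.Walk u w}

lemma IsPath.idxOf_getVert (hp : p.IsPath) {k : ℕ} (hk : k ≤ p.length) :
    p.support.idxOf (p.getVert k) = k := by
  rw [p.getVert_eq_support_getElem hk]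
  exact hp.support_nodup.idxOf_getElem _ _

lemma getVert_idxOf_of_le_length {x : V} (hx : p.support.idxOf x ≤ p.length) :
    p.getVert (p.support.idxOf x) = x :=
  p.getVert_support_idxOf <| List.idxOf_lt_length_iff.mp <| by
    rw [p.length_support]; omega

lemma IsPath.hamOrient_adj_getVert_succ (hp : p.IsPath) {k : ℕ} (hk : k < p.length) :
    (hamOrient G p).Adj (p.getVert k) (p.getVert (k + 1)) :=
  ⟨p.adj_getVert_succ hk, .inl <| by rw [hp.idxOf_getVert hk.le, hp.idxOf_getVert hk]⟩

lemma IsPath.exists_lt_getVert_eq_of_hamOrient_adj (hp : p.IsPath) {k : ℕ} (hk : k < p.length)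
    {x : V} (hx : (hamOrient G p).Adj (p.getVert k) x) (hne : x ≠ p.getVert (k + 1)) :
    ∃ j < k, p.getVert j = x := by
  rw [hamOrient_adj, hp.idxOf_getVert hk.le] at hx
  obtain ⟨-, hsucc | ⟨hlt, -⟩⟩ := hx
  · refine absurd ?_ hne
    rw [← hsucc, getVert_idxOf_of_le_length (by omega)]
  · exact ⟨_, hlt, getVert_idxOf_of_le_length (by omega)⟩

lemma IsPath.dPropReach_hamOrient_getVert (hp : p.IsPath) {k : ℕ} (hk : k ≤ p.length) :
    DPropReach (hamOrient G p) {u} (p.getVert k) := by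
  induction k using Nat.strong_induction_on with
  | _ k ih =>
    match k with
    | 0 => exact .base p.getVert_zero
    | k + 1 =>
      refine .step (ih k k.lt_add_one (by omega)) (hp.hamOrient_adj_getVert_succ hk)
        fun x hx hne => ?_
      obtain ⟨j, hjk, rfl⟩ := hp.exists_lt_getVert_eq_of_hamOrient_adj hk hx hne
      exact ih j (by omega) (by omega)

lemma IsHamiltonian.dPropagates_hamOrient (hp : p.IsHamiltonian) :
    DPropagates (hamOrient G p) {u} := fun v => by
  obtain ⟨k, rfl, hk⟩ := mem_support_iff_exists_getVert.mp (hp.mem_support v)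
  exact hp.isPath.dPropReach_hamOrient_getVert hk

end SimpleGraph.Walk

/-- If a graph `G` has a Hamilton path, then some orientation `D` of `G`
admits a single vertex propagating to `D`; specifically, orienting the edges of the Hamilton
path forward and all remaining edges backward yields such an orientation, with the singleton
consisting of the first vertex of the path propagating to it. -/
theorem orientation_singleton_propagates_of_hamiltonianPath
    {V : Type*} [DecidableEq V] (G : SimpleGraph V) (u w : V) (p : G.Walk u w)
    (hp : p.IsHamiltonian) :
    (∃ (D : Digraph V) (u₀ : V), IsOrientation G D ∧ DPropagates D {u₀}) ∧
    IsOrientation G (hamOrient G p) ∧ DPropagates (hamOrient G p) {u} := by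
  have horient := isOrientation_hamOrient hp.mem_support
  have hprop := hp.dPropagates_hamOrient
  exact ⟨⟨_, u, horient, hprop⟩, horient, hprop⟩
end

section
/- For all m ≥ 1 and k ≥ 1, the number of walks of length k between two fixed distinct vertices of the complete graph K_{m+1} equals (m^k + (-1)^{k-1})/(m+1); that is, for i ≠ j, the (i,j) entry of the k-th power of the adjacency matrix of K_{m+1} is (m^k − (−1)^k)/(m+1). In particular, for m ≥ 2 this number equals the minimum propagating-set cardinality of the balanced m-ary tree with k levels: (A(K_{m+1})^k)_{i,j} = π(T_{m,k}) where T_{m,k} is the balanced m-ary tree with (m^k − 1)/(m − 1) vertices. -/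
open Set Matrix

section Propagation

variable {V : Type*} {G : SimpleGraph V} {S P : Set V}

def Forces (G : SimpleGraph V) (P : Set V) (v w : V) : Prop :=
  v ∈ P ∧ G.Adj v w ∧ ∀ x, G.Adj v x → x ≠ w → x ∈ P

theorem PropReach.mem_of_forces_mem (hSP : S ⊆ P) (hP : ∀ v w, Forces G P v w → w ∈ P)
    {v : V} (h : PropReach G S v) : v ∈ P := by
  induction h with
  | base hv => exact hSP hv
  | step _ hadj _ ihv ihall => exact hP _ _ ⟨ihv, hadj, ihall⟩

theorem Propagates.exists_forces (hS : Propagates G S) (hSP : S ⊆ P) (hP : P ≠ univ) :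
    ∃ v w, Forces G P v w ∧ w ∉ P := by
  by_contra! h
  exact hP (eq_univ_of_forall fun v => (hS v).mem_of_forces_mem hSP h)

theorem Propagates.apply_le_apply_univ [Finite V] {α : Type*} [Preorder α] {f : Set V → α}
    (hf : ∀ P v w, Forces G P v w → w ∉ P → f P ≤ f (insert w P)) (hS : Propagates G S) :
    f S ≤ f univ := by
  refine (Finite.induction_to_univ (C := fun P => S ⊆ P ∧ f S ≤ f P) S
    ⟨subset_rfl, le_rfl⟩ ?_).2
  rintro P hP ⟨hSP, hfP⟩
  obtain ⟨v, w, hvw, hw⟩ := hS.exists_forces hSP hP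
  exact ⟨w, hw, hSP.trans (subset_insert _ _), hfP.trans (hf P v w hvw hw)⟩

theorem Propagates.natCard_le_ncard_add_two_mul_ncard [Finite V] {B : Set V}
    (hB : ∀ v w, G.Adj v w → v ∈ B ∨ w ∈ B) (hS : Propagates G S) :
    Nat.card V ≤ S.ncard + 2 * B.ncard := by
  let exhausted (P : Set V) : Set V := {v ∈ B | ∀ x, G.Adj v x → x ∈ P}
  have hpot := hS.apply_le_apply_univ
    (f := fun P => ((P ∩ B).ncard + (exhausted P).ncard - P.ncard : ℤ)) ?_
  · have hexhausted : exhausted univ = B := by ext; simp [exhausted]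
    simp only [univ_inter, hexhausted, ncard_univ] at hpot
    omega
  intro P v w ⟨hv, hvw, hall⟩ hw
  have hcard : (insert w P).ncard = P.ncard + 1 := ncard_insert_of_notMem hw
  have hinter : (P ∩ B).ncard ≤ (insert w P ∩ B).ncard :=
    ncard_le_ncard (inter_subset_inter_left _ (subset_insert _ _))
  have hmono : exhausted P ⊆ exhausted (insert w P) :=
    fun u ⟨hu, hux⟩ => ⟨hu, fun x hx => mem_insert_of_mem _ (hux x hx)⟩
  rcases hB v w hvw with hvB | hwB
  · have hv' : v ∈ exhausted (insert w P) \ exhausted P := by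
      refine ⟨⟨hvB, fun x hx => ?_⟩, fun h => hw (h.2 w hvw)⟩
      by_cases hxw : x = w
      · exact hxw ▸ mem_insert w P
      · exact mem_insert_of_mem _ (hall x hx hxw)
    have := ncard_lt_ncard (ssubset_of_subset_not_subset hmono fun h => hv'.2 (h hv'.1))
    omega
  · have : (insert w P ∩ B).ncard = (P ∩ B).ncard + 1 := by
      rw [insert_inter_of_mem hwB, ncard_insert_of_notMem fun h => hw h.1]
    have := ncard_le_ncard hmono
    omega

end Propagation

namespace SimpleGraph

variable {V : Type*} [Fintype V] [DecidableEq V] {G : SimpleGraph V} [DecidableRel G.Adj]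
  {R : Type*}

theorem IsRegularOfDegree.adjMatrix_pow_mulVec_const [Semiring R] {d : ℕ}
    (hG : G.IsRegularOfDegree d) (k : ℕ) (a : R) :
    G.adjMatrix R ^ k *ᵥ Function.const V a = Function.const V ((d : R) ^ k * a) := by
  induction k with
  | zero => simp
  | succ k ih =>
    ext v
    rw [pow_succ', ← mulVec_mulVec, ih, adjMatrix_mulVec_const_apply_of_regular hG, pow_succ',
      mul_assoc, Function.const_apply]

theorem natCast_adjMatrix_pow_apply [Semiring R] (k : ℕ) (u v : V) :
    ((G.adjMatrix ℕ ^ k) u v : R) = (G.adjMatrix R ^ k) u v := by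
  simp [adjMatrix_pow_apply_eq_card_walk]

theorem adjMatrix_top_pow_apply_of_ne [CommRing R] {n : ℕ} (hV : Fintype.card V = n + 1)
    {i j : V} (hij : i ≠ j) (k : ℕ) :
    (n + 1 : R) * ((⊤ : SimpleGraph V).adjMatrix R ^ k) i j = n ^ k - (-1) ^ k := by
  induction k with
  | zero => simp [hij]
  | succ k ih =>
    have hrow : ∑ l, ((⊤ : SimpleGraph V).adjMatrix R ^ k) i l = n ^ k := by
      have := congrFun ((IsRegularOfDegree.top (V := V)).adjMatrix_pow_mulVec_const k (1 : R)) i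
      simpa [mulVec, dotProduct, hV] using this
    have hstep : ((⊤ : SimpleGraph V).adjMatrix R ^ (k + 1)) i j
        = n ^ k - ((⊤ : SimpleGraph V).adjMatrix R ^ k) i j := by
      rw [pow_succ, mul_apply, ← hrow, ← Finset.sum_erase_eq_sub (Finset.mem_univ j)]
      simp [adjMatrix_apply, Finset.sum_ite, Finset.filter_ne']
    rw [hstep, mul_sub, ih]
    ring

end SimpleGraph

theorem sum_neg_one_pow_eq_ncard_sub_ncard {α : Type*} [Fintype α] (g : α → ℕ) :
    ∑ a, (-1 : ℤ) ^ g a = {a | Even (g a)}.ncard - {a | Odd (g a)}.ncard := by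
  classical
  rw [ncard_eq_toFinset_card', ncard_eq_toFinset_card', toFinset_ofPred, toFinset_ofPred,
    ← Finset.sum_filter_add_sum_filter_not Finset.univ (fun a => Even (g a)),
    Finset.sum_congr rfl fun a ha => (Finset.mem_filter.1 ha).2.neg_one_pow,
    Finset.sum_congr rfl fun a ha =>
      (Nat.not_even_iff_odd.1 (Finset.mem_filter.1 ha).2).neg_one_pow]
  simp [Nat.not_even_iff_odd, sub_eq_add_neg]

namespace BalancedTree

abbrev Node (m d : ℕ) := {l : List (Fin m) // l.length ≤ d}

variable {m d : ℕ}

noncomputable instance : Fintype (Node m d) := (List.finite_length_le (Fin m) d).fintype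

def height (v : Node m d) : ℕ := d - v.1.length

def evenNodes (m d : ℕ) : Set (Node m d) := {v | Even (height v)}

def oddNodes (m d : ℕ) : Set (Node m d) := {v | Odd (height v)}

theorem mem_evenNodes {v : Node m d} : v ∈ evenNodes m d ↔ (d - v.1.length) % 2 = 0 :=
  Nat.even_iff

theorem mem_oddNodes {v : Node m d} : v ∈ oddNodes m d ↔ (d - v.1.length) % 2 = 1 :=
  Nat.odd_iff

theorem mem_oddNodes_or_mem_oddNodes_of_adj {u v : Node m d} (h : (BalancedTree m d).Adj u v) :
    u ∈ oddNodes m d ∨ v ∈ oddNodes m d := by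
  have hu := u.2
  have hv := v.2
  rw [mem_oddNodes, mem_oddNodes]
  rcases h with ⟨x, h⟩ | ⟨x, h⟩ <;> have := congrArg List.length h <;>
    simp only [List.length_cons] at this <;> omega

theorem ncard_evenNodes_le {S : Set (Node m d)} (hS : Propagates (BalancedTree m d) S) :
    (evenNodes m d).ncard ≤ S.ncard + (oddNodes m d).ncard := by
  have hcompl : oddNodes m d = (evenNodes m d)ᶜ := by
    ext; simp [oddNodes, evenNodes]
  have := hS.natCard_le_ncard_add_two_mul_ncard fun _ _ => mem_oddNodes_or_mem_oddNodes_of_adj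
  rw [← ncard_add_ncard_compl (evenNodes m d), ← hcompl] at this
  omega

-- The head of a nonempty word is the node's index among its siblings.
def seed (m d : ℕ) : Set (Node m d) :=
  {v ∈ evenNodes m d | ∀ a ∈ v.1.head?, (a : ℕ) ≠ 0}

theorem propReach_seed_of_mem_oddNodes (hm : 2 ≤ m) (v : Node m d) (hv : v ∈ oddNodes m d) :
    PropReach (BalancedTree m d) (seed m d) v := by
  induction hn : height v using Nat.strong_induction_on generalizing v with
  | _ n ih =>
  rw [mem_oddNodes] at hv
  obtain ⟨c, hc⟩ : ∃ c : Node m d, c.1 = ⟨1, hm⟩ :: v.1 :=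
    ⟨⟨_, by simp only [List.length_cons]; omega⟩, rfl⟩
  have hcs : c ∈ seed m d :=
    ⟨mem_evenNodes.2 (by simp only [hc, List.length_cons]; omega), by simp [hc]⟩
  refine .step (.base hcs) (Or.inl ⟨_, hc⟩) fun u hcu hne => ?_
  rcases hcu with ⟨y, hy⟩ | ⟨y, hy⟩
  · exact absurd (Subtype.ext (List.cons_eq_cons.mp (hy.symm.trans hc)).2) hne
  · have hu := u.2
    simp only [hy, hc, List.length_cons] at hu
    exact ih (height u) (by simp only [← hn, height, hy, hc, List.length_cons]; omega) u
      (mem_oddNodes.2 (by simp only [hy, hc, List.length_cons]; omega)) rfl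

theorem exists_mem_oddNodes_eq_cons_of_notMem_seed {v : Node m d} (hv : v ∈ evenNodes m d)
    (hs : v ∉ seed m d) :
    ∃ a : Fin m, (a : ℕ) = 0 ∧ ∃ p ∈ oddNodes m d, v.1 = a :: p.1 := by
  obtain ⟨a, ha, ha0⟩ : ∃ a ∈ v.1.head?, (a : ℕ) = 0 := by
    by_contra! h
    exact hs ⟨hv, h⟩
  obtain ⟨t, hvt⟩ := List.head?_eq_some_iff.mp ha
  have hvd := v.2
  rw [mem_evenNodes, hvt, List.length_cons] at hv
  rw [hvt, List.length_cons] at hvd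
  exact ⟨a, ha0, ⟨t, by omega⟩, mem_oddNodes.2 (by dsimp only; omega), hvt⟩

theorem propagates_seed (hm : 2 ≤ m) : Propagates (BalancedTree m d) (seed m d) := by
  intro v
  induction hn : v.1.length using Nat.strong_induction_on generalizing v with
  | _ n ih =>
  by_cases hodd : v ∈ oddNodes m d
  · exact propReach_seed_of_mem_oddNodes hm v hodd
  by_cases hseed : v ∈ seed m d
  · exact .base hseed
  have heven : v ∈ evenNodes m d := Nat.not_odd_iff_even.mp hodd
  obtain ⟨a, ha0, p, hp, hv⟩ := exists_mem_oddNodes_eq_cons_of_notMem_seed heven hseed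
  refine .step (propReach_seed_of_mem_oddNodes hm p hp) (Or.inr ⟨a, hv⟩) fun u hpu hne => ?_
  rcases hpu with ⟨y, hy⟩ | ⟨y, hy⟩
  · refine ih u.1.length ?_ u rfl
    rw [← hn, hv, hy]
    simp
  · have hya : (y : ℕ) ≠ 0 := fun hy0 =>
      hne (Subtype.ext (by rw [hy, hv, Fin.ext (hy0.trans ha0.symm)]))
    refine .base ⟨?_, by simp [hy, hya]⟩
    rw [mem_evenNodes, hv, List.length_cons] at heven
    rwa [mem_evenNodes, hy, List.length_cons]

theorem ncard_seed_add_ncard_oddNodes (hm : 2 ≤ m) :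
    (seed m d).ncard + (oddNodes m d).ncard = (evenNodes m d).ncard := by
  have hfirst : (oddNodes m d).ncard = (evenNodes m d \ seed m d).ncard := by
    refine ncard_congr (fun p hp => ⟨⟨0, by omega⟩ :: p.1, ?_⟩) ?_ ?_ ?_
    · rw [mem_oddNodes] at hp
      simp only [List.length_cons]
      omega
    · intro p hp
      refine ⟨?_, fun h => by simpa using h.2⟩
      rw [mem_oddNodes] at hp
      rw [mem_evenNodes, List.length_cons]
      omega
    · intro p q _ _ h
      exact Subtype.ext (List.cons_injective (congrArg Subtype.val h))
    · intro v ⟨hv, hs⟩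
      obtain ⟨a, ha0, p, hp, hvp⟩ := exists_mem_oddNodes_eq_cons_of_notMem_seed hv hs
      exact ⟨p, hp, Subtype.ext (by rw [hvp, show a = ⟨0, _⟩ from Fin.ext ha0])⟩
  rw [hfirst, add_comm,
    ncard_sdiff_add_ncard_of_subset (show seed m d ⊆ evenNodes m d from sep_subset _ _)]

theorem propNum_add_ncard_oddNodes (hm : 2 ≤ m) :
    propNum (BalancedTree m d) + (oddNodes m d).ncard = (evenNodes m d).ncard := by
  obtain ⟨S, hS, hprop⟩ := Nat.sInf_mem
    (s := {n | ∃ S, S.ncard = n ∧ Propagates (BalancedTree m d) S})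
    ⟨_, seed m d, rfl, propagates_seed hm⟩
  have hle : propNum (BalancedTree m d) ≤ (seed m d).ncard :=
    Nat.sInf_le ⟨_, rfl, propagates_seed hm⟩
  have := ncard_evenNodes_le hprop
  have := ncard_seed_add_ncard_oddNodes (d := d) hm
  rw [propNum, ← hS] at hle ⊢
  omega

theorem card_filter_length_eq {i : ℕ} (hi : i ≤ d) :
    (Finset.univ.filter fun v : Node m d => v.1.length = i).card = m ^ i := by
  have e : {v : Node m d // v.1.length = i} ≃ List.Vector (Fin m) i :=
    Equiv.subtypeSubtypeEquivSubtype (q := fun l : List (Fin m) => l.length = i) fun h => h ▸ hi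
  rw [← Fintype.card_subtype, Fintype.card_congr e, card_vector, Fintype.card_fin]

theorem sum_comp_length {R : Type*} [CommSemiring R] (f : ℕ → R) :
    ∑ v : Node m d, f v.1.length = ∑ i ∈ Finset.range (d + 1), (m : R) ^ i * f i := by
  rw [← Finset.sum_fiberwise_of_maps_to' (g := fun v : Node m d => v.1.length)
    (t := Finset.range (d + 1)) fun v _ => Finset.mem_range_succ_iff.2 v.2]
  refine Finset.sum_congr rfl fun i hi => ?_
  rw [Finset.sum_const, card_filter_length_eq (Finset.mem_range_succ_iff.1 hi), nsmul_eq_mul,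
    Nat.cast_pow]

theorem mul_ncard_evenNodes_sub_ncard_oddNodes :
    ((m : ℤ) + 1) * ((evenNodes m d).ncard - (oddNodes m d).ncard)
      = m ^ (d + 1) - (-1) ^ (d + 1) := by
  rw [evenNodes, oddNodes, ← sum_neg_one_pow_eq_ncard_sub_ncard]
  simp only [height]
  rw [sum_comp_length (fun i => (-1 : ℤ) ^ (d - i)), ← geom_sum₂_mul, mul_comm,
    sub_neg_eq_add, Nat.add_sub_cancel]

theorem mul_propNum (hm : 2 ≤ m) :
    ((m : ℤ) + 1) * propNum (BalancedTree m d) = m ^ (d + 1) - (-1) ^ (d + 1) := by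
  rw [← mul_ncard_evenNodes_sub_ncard_oddNodes, ← propNum_add_ncard_oddNodes hm]
  push_cast
  ring

end BalancedTree

theorem adjMatrix_pow_completeGraph_eq_propNum_general (m k : ℕ) (hk : 1 ≤ k)
    (i j : Fin (m + 1)) (hij : i ≠ j) :
    ((m : ℤ) + 1) * ((SimpleGraph.adjMatrix ℤ (⊤ : SimpleGraph (Fin (m + 1)))) ^ k) i j
        = (m : ℤ) ^ k + (-1) ^ (k - 1) ∧
    (2 ≤ m →
      ((SimpleGraph.adjMatrix ℕ (⊤ : SimpleGraph (Fin (m + 1)))) ^ k) i j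
        = propNum (BalancedTree m (k - 1))) := by
  obtain ⟨d, rfl⟩ : ∃ d, k = d + 1 := ⟨k - 1, by omega⟩
  have hwalks :=
    SimpleGraph.adjMatrix_top_pow_apply_of_ne (R := ℤ) (Fintype.card_fin _) hij (d + 1)
  rw [Nat.add_sub_cancel]
  refine ⟨by rw [hwalks, pow_succ]; ring, fun hm => ?_⟩
  have h := (BalancedTree.mul_propNum (d := d) hm).trans hwalks.symm
  rw [← SimpleGraph.natCast_adjMatrix_pow_apply] at h
  exact_mod_cast (mul_left_cancel₀ (by positivity) h).symm

/-- For `m, k ≥ 1` and distinct vertices `i ≠ j` of the complete graph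
`K_{m+1}`, the number of walks of length `k` from `i` to `j` — the `(i,j)` entry of the
`k`-th power of the adjacency matrix — equals `(m^k + (-1)^(k-1))/(m+1)`, stated
multiplicatively over `ℤ`; in particular, for `m ≥ 2` it equals `π` of the balanced `m`-ary
tree with `k` levels (depth `k - 1`). -/
theorem adjMatrix_pow_completeGraph_eq_propNum (m k : ℕ) (hm : 1 ≤ m) (hk : 1 ≤ k)
    (i j : Fin (m + 1)) (hij : i ≠ j) :
    ((m : ℤ) + 1) * ((SimpleGraph.adjMatrix ℤ (⊤ : SimpleGraph (Fin (m + 1)))) ^ k) i j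
        = (m : ℤ) ^ k + (-1) ^ (k - 1) ∧
    (2 ≤ m →
      ((SimpleGraph.adjMatrix ℕ (⊤ : SimpleGraph (Fin (m + 1)))) ^ k) i j
        = propNum (BalancedTree m (k - 1))) :=
  adjMatrix_pow_completeGraph_eq_propNum_general m k hk i j hij
end
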